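/- arXiv:1206.1783 — 6 statements merged into one kernel-verified Lean document; each statement's English description precedes it below -/
import Mathlib

section
/- Fix k > 0, β₁ > 0, β₂ > 0 and let u₁(x₁,x₂) = log x₁ + β₁ log(k − x₁ − x₂), u₂(x₁,x₂) = log x₂ + β₂ log(k − x₁ − x₂). For every point (x₁,x₂) with x₁ > 0, x₂ > 0 and x₁ + x₂ < k, the gradients ∇u₁(x₁,x₂) = (1/x₁ − β₁/(k−x₁−x₂), −β₁/(k−x₁−x₂)) and ∇u₂(x₁,x₂) = (−β₂/(k−x₁−x₂), 1/x₂ − β₂/(k−x₁−x₂)) are linearly dependent if and only if (1+β₁)x₁ + (1+β₂)x₂ = k. -/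
/-!
Two vectors of `K × K` are linearly dependent exactly when their determinant vanishes, and the
determinant of the two gradients is `(k - (1+β₁)x₁ - (1+β₂)x₂) / (x₁ x₂ (k - x₁ - x₂))`.
-/

theorem linearIndependent_pair_prod_iff {K : Type*} [Field K] {a b c d : K} :
    LinearIndependent K ![(a, b), (c, d)] ↔ a * d - b * c ≠ 0 := by
  rw [← Matrix.det_fin_two_of, ← isUnit_iff_ne_zero, ← Matrix.isUnit_iff_isUnit_det,
    ← Matrix.linearIndependent_rows_iff_isUnit,
    ← (LinearEquiv.finTwoArrow K K).symm.toLinearMap.linearIndependent_iff (LinearEquiv.ker _)]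
  congr! 1
  ext i j
  fin_cases i <;> fin_cases j <;> rfl

theorem gradient_det_eq {K : Type*} [Field K] {x₁ x₂ r : K} (β₁ β₂ : K)
    (hx₁ : x₁ ≠ 0) (hx₂ : x₂ ≠ 0) (hr : r ≠ 0) :
    (1 / x₁ - β₁ / r) * (1 / x₂ - β₂ / r) - (-β₁ / r) * (-β₂ / r)
      = (r - β₁ * x₁ - β₂ * x₂) / (x₁ * x₂ * r) := by
  field_simp
  ring

theorem stmt_3_general (k β₁ β₂ x₁ x₂ : ℝ)
    (hx₁ : 0 < x₁) (hx₂ : 0 < x₂) (hsum : x₁ + x₂ < k) :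
    ¬ LinearIndependent ℝ
        ![((1 / x₁ - β₁ / (k - x₁ - x₂), -β₁ / (k - x₁ - x₂)) : ℝ × ℝ),
          ((-β₂ / (k - x₁ - x₂), 1 / x₂ - β₂ / (k - x₁ - x₂)) : ℝ × ℝ)]
      ↔ (1 + β₁) * x₁ + (1 + β₂) * x₂ = k := by
  have hr : 0 < k - x₁ - x₂ := by linarith
  rw [linearIndependent_pair_prod_iff, not_not,
    gradient_det_eq β₁ β₂ hx₁.ne' hx₂.ne' hr.ne', div_eq_zero_iff,
    or_iff_left (by positivity)]
  constructor <;> intro h <;> linarith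

/-- Fix `k > 0`, `β₁ > 0`, `β₂ > 0`. For every point `(x₁, x₂)` with `x₁ > 0`,
`x₂ > 0` and `x₁ + x₂ < k`, the gradients
`∇u₁ = (1/x₁ - β₁/(k-x₁-x₂), -β₁/(k-x₁-x₂))` and
`∇u₂ = (-β₂/(k-x₁-x₂), 1/x₂ - β₂/(k-x₁-x₂))` are linearly dependent
if and only if `(1+β₁) x₁ + (1+β₂) x₂ = k`. -/
theorem stmt_3 (k β₁ β₂ x₁ x₂ : ℝ) (hk : 0 < k) (hβ₁ : 0 < β₁) (hβ₂ : 0 < β₂)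
    (hx₁ : 0 < x₁) (hx₂ : 0 < x₂) (hsum : x₁ + x₂ < k) :
    ¬ LinearIndependent ℝ
        ![((1 / x₁ - β₁ / (k - x₁ - x₂), -β₁ / (k - x₁ - x₂)) : ℝ × ℝ),
          ((-β₂ / (k - x₁ - x₂), 1 / x₂ - β₂ / (k - x₁ - x₂)) : ℝ × ℝ)]
      ↔ (1 + β₁) * x₁ + (1 + β₂) * x₂ = k :=
  stmt_3_general k β₁ β₂ x₁ x₂ hx₁ hx₂ hsum
end

section
/- Fix k > 0, β₁ > 0, β₂ > 0 and let u₁(x₁,x₂) = log x₁ + β₁ log(k − x₁ − x₂), u₂(x₁,x₂) = log x₂ + β₂ log(k − x₁ − x₂). Let x = (x₁,x₂) satisfy x₁ > 0, x₂ > 0, x₁ + x₂ < k and (1+β₁)x₁ + (1+β₂)x₂ = k. Then for every y = (y₁,y₂) with y₁ > 0, y₂ > 0, y₁ + y₂ < k and y ≠ x, either u₁(y) < u₁(x) or u₂(y) < u₂(x). That is, every point of the frontier segment is strictly Pareto efficient: no other feasible point weakly improves both parties' utilities. -/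
/-! On the frontier the slack `s = k - x₁ - x₂` equals `β₁ x₁ + β₂ x₂`, so the weighted sum of
the two utility gains `x₁ Δu₁ + x₂ Δu₂` equals the Gibbs sum
`x₁ log (y₁/x₁) + x₂ log (y₂/x₂) + s log (s'/s)` of the two positive triples `(x₁, x₂, s)` and
`(y₁, y₂, s')`, which both sum to `k`. Gibbs' inequality makes this sum negative when `y ≠ x`,
so one of the gains is negative. -/

open Real Finset

theorem mul_log_div_le_sub {a b : ℝ} (ha : 0 < a) (hb : 0 < b) : a * log (b / a) ≤ b - a :=
  calc a * log (b / a) ≤ a * (b / a - 1) :=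
        mul_le_mul_of_nonneg_left (log_le_sub_one_of_pos (div_pos hb ha)) ha.le
    _ = b - a := by field_simp

theorem mul_log_div_lt_sub {a b : ℝ} (ha : 0 < a) (hb : 0 < b) (hab : a ≠ b) :
    a * log (b / a) < b - a :=
  calc a * log (b / a) < a * (b / a - 1) := by
        refine mul_lt_mul_of_pos_left (log_lt_sub_one_of_pos (div_pos hb ha) ?_) ha
        rwa [ne_eq, div_eq_one_iff_eq ha.ne', eq_comm]
    _ = b - a := by field_simp

theorem Finset.sum_mul_log_div_lt_zero {ι : Type*} {s : Finset ι} {a b : ι → ℝ}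
    (ha : ∀ i ∈ s, 0 < a i) (hb : ∀ i ∈ s, 0 < b i) (hab : ∑ i ∈ s, a i = ∑ i ∈ s, b i)
    (hne : ∃ i ∈ s, a i ≠ b i) : ∑ i ∈ s, a i * log (b i / a i) < 0 := by
  obtain ⟨j, hj, hj_ne⟩ := hne
  calc ∑ i ∈ s, a i * log (b i / a i) < ∑ i ∈ s, (b i - a i) :=
        sum_lt_sum (fun i hi ↦ mul_log_div_le_sub (ha i hi) (hb i hi))
          ⟨j, hj, mul_log_div_lt_sub (ha j hj) (hb j hj) hj_ne⟩
    _ = 0 := by rw [sum_sub_distrib, hab, sub_self]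

theorem frontier_weighted_gain_neg {k β₁ β₂ : ℝ} {x y : ℝ × ℝ}
    (hx₁ : 0 < x.1) (hx₂ : 0 < x.2) (hxsum : x.1 + x.2 < k)
    (hfront : (1 + β₁) * x.1 + (1 + β₂) * x.2 = k)
    (hy₁ : 0 < y.1) (hy₂ : 0 < y.2) (hysum : y.1 + y.2 < k) (hne : y ≠ x) :
    x.1 * (log y.1 + β₁ * log (k - y.1 - y.2) - (log x.1 + β₁ * log (k - x.1 - x.2)))
      + x.2 * (log y.2 + β₂ * log (k - y.1 - y.2) - (log x.2 + β₂ * log (k - x.1 - x.2)))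
      < 0 := by
  have hsx : 0 < k - x.1 - x.2 := by linarith
  have hsy : 0 < k - y.1 - y.2 := by linarith
  have hgibbs := sum_mul_log_div_lt_zero (s := univ)
    (a := ![x.1, x.2, k - x.1 - x.2]) (b := ![y.1, y.2, k - y.1 - y.2])
    (by simp [Fin.forall_fin_succ, hx₁, hx₂, hsx]) (by simp [Fin.forall_fin_succ, hy₁, hy₂, hsy])
    (by simp only [Fin.sum_univ_three, Matrix.cons_val]; ring)
    (by
      by_contra! h
      exact hne (Prod.ext (h 0 (mem_univ _)).symm (h 1 (mem_univ _)).symm))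
  simp only [Fin.sum_univ_three, Matrix.cons_val] at hgibbs
  rw [log_div hy₁.ne' hx₁.ne', log_div hy₂.ne' hx₂.ne', log_div hsy.ne' hsx.ne'] at hgibbs
  linarith [show (log (k - y.1 - y.2) - log (k - x.1 - x.2)) *
      ((1 + β₁) * x.1 + (1 + β₂) * x.2 - k) = 0 by rw [hfront, sub_self, mul_zero]]

theorem stmt_5_general (k β₁ β₂ : ℝ)
    (u₁ u₂ : ℝ × ℝ → ℝ)
    (hu₁ : ∀ p : ℝ × ℝ, u₁ p = Real.log p.1 + β₁ * Real.log (k - p.1 - p.2))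
    (hu₂ : ∀ p : ℝ × ℝ, u₂ p = Real.log p.2 + β₂ * Real.log (k - p.1 - p.2))
    (x : ℝ × ℝ) (hx₁ : 0 < x.1) (hx₂ : 0 < x.2) (hxsum : x.1 + x.2 < k)
    (hfront : (1 + β₁) * x.1 + (1 + β₂) * x.2 = k) :
    ∀ y : ℝ × ℝ, 0 < y.1 → 0 < y.2 → y.1 + y.2 < k → y ≠ x →
      u₁ y < u₁ x ∨ u₂ y < u₂ x := by
  intro y hy₁ hy₂ hysum hne
  by_contra! h
  have hgain := frontier_weighted_gain_neg hx₁ hx₂ hxsum hfront hy₁ hy₂ hysum hne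
  rw [← hu₁, ← hu₁, ← hu₂, ← hu₂] at hgain
  linarith [mul_nonneg hx₁.le (sub_nonneg.2 h.1), mul_nonneg hx₂.le (sub_nonneg.2 h.2)]

/-- Fix `k > 0`, `β₁ > 0`, `β₂ > 0` and the utilities
`u₁ (x₁,x₂) = log x₁ + β₁ log (k-x₁-x₂)`, `u₂ (x₁,x₂) = log x₂ + β₂ log (k-x₁-x₂)`.
If `x = (x₁,x₂)` lies in the open region and on the line `(1+β₁)x₁+(1+β₂)x₂ = k`,
then every other point `y` of the open region strictly decreases the utility of
at least one party: points of the frontier are strictly Pareto efficient. -/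
theorem stmt_5 (k β₁ β₂ : ℝ) (hk : 0 < k) (hβ₁ : 0 < β₁) (hβ₂ : 0 < β₂)
    (u₁ u₂ : ℝ × ℝ → ℝ)
    (hu₁ : ∀ p : ℝ × ℝ, u₁ p = Real.log p.1 + β₁ * Real.log (k - p.1 - p.2))
    (hu₂ : ∀ p : ℝ × ℝ, u₂ p = Real.log p.2 + β₂ * Real.log (k - p.1 - p.2))
    (x : ℝ × ℝ) (hx₁ : 0 < x.1) (hx₂ : 0 < x.2) (hxsum : x.1 + x.2 < k)
    (hfront : (1 + β₁) * x.1 + (1 + β₂) * x.2 = k) :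
    ∀ y : ℝ × ℝ, 0 < y.1 → 0 < y.2 → y.1 + y.2 < k → y ≠ x →
      u₁ y < u₁ x ∨ u₂ y < u₂ x :=
  stmt_5_general k β₁ β₂ u₁ u₂ hu₁ hu₂ x hx₁ hx₂ hxsum hfront
end

section
/- Fix k > 0, β₁ > 0, β₂ > 0 and let u₁(x₁,x₂) = log x₁ + β₁ log(k − x₁ − x₂), u₂(x₁,x₂) = log x₂ + β₂ log(k − x₁ − x₂). If x = (x₁,x₂) satisfies x₁ > 0, x₂ > 0, x₁ + x₂ < k and (1+β₁)x₁ + (1+β₂)x₂ ≠ k, then there exists y = (y₁,y₂) with y₁ > 0, y₂ > 0, y₁ + y₂ < k such that u₁(y) > u₁(x) and u₂(y) > u₂(x). That is, every interior point off the line (1+β₁)x₁ + (1+β₂)x₂ = k is not Pareto efficient. -/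
/-!
Off the line `(1+β₁)x₁ + (1+β₂)x₂ = k` the gradients of `u₁` and `u₂` at `x` are linearly
independent, so some direction `d` raises both utilities at unit rate. Moving a little from `x`
along `d` stays inside the open region and strictly improves both parties.
-/

open Filter Topology Real

theorem HasDerivAt.eventually_lt_nhdsGT {f : ℝ → ℝ} {f' a : ℝ} (hf : HasDerivAt f f' a)
    (hf' : 0 < f') : ∀ᶠ t in 𝓝[>] a, f a < f t := by
  have hslope := (hasDerivAt_iff_tendsto_slope.mp hf).mono_left (nhdsGT_le_nhdsNE a)
  filter_upwards [hslope.eventually (eventually_gt_nhds hf'), self_mem_nhdsWithin] with t hs ht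
  rw [slope_def_field] at hs
  exact sub_pos.1 ((div_pos_iff_of_pos_right (sub_pos.2 ht)).1 hs)

theorem exists_lt_lt_of_hasDerivAt_comp {X : Type*} [TopologicalSpace X] {γ : ℝ → X}
    {f g : X → ℝ} {U : Set X} {f' g' : ℝ} (hγ : ContinuousAt γ 0) (hU : U ∈ 𝓝 (γ 0))
    (hf : HasDerivAt (f ∘ γ) f' 0) (hg : HasDerivAt (g ∘ γ) g' 0) (hf' : 0 < f') (hg' : 0 < g') :
    ∃ t, γ t ∈ U ∧ f (γ 0) < f (γ t) ∧ g (γ 0) < g (γ t) :=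
  ((((hγ.eventually_mem hU).filter_mono nhdsWithin_le_nhds).and
    ((hf.eventually_lt_nhdsGT hf').and (hg.eventually_lt_nhdsGT hg')))).exists

theorem hasDerivAt_log_add_mul_log {a r da dr : ℝ} (β : ℝ) (ha : a ≠ 0) (hr : r ≠ 0) :
    HasDerivAt (fun t ↦ log (a + t * da) + β * log (r + t * dr)) (da / a + β * (dr / r)) 0 := by
  have hline : ∀ b db : ℝ, HasDerivAt (fun t ↦ b + t * db) db 0 := fun b db ↦ by
    simpa using ((hasDerivAt_id (0 : ℝ)).mul_const db).const_add b
  simpa using ((hline a da).log (by simpa)).fun_add (((hline r dr).log (by simpa)).const_mul β)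

theorem stmt_6_general (k β₁ β₂ : ℝ)
    (u₁ u₂ : ℝ × ℝ → ℝ)
    (hu₁ : ∀ p : ℝ × ℝ, u₁ p = Real.log p.1 + β₁ * Real.log (k - p.1 - p.2))
    (hu₂ : ∀ p : ℝ × ℝ, u₂ p = Real.log p.2 + β₂ * Real.log (k - p.1 - p.2))
    (x : ℝ × ℝ) (hx₁ : 0 < x.1) (hx₂ : 0 < x.2) (hxsum : x.1 + x.2 < k)
    (hoff : (1 + β₁) * x.1 + (1 + β₂) * x.2 ≠ k) :
    ∃ y : ℝ × ℝ, 0 < y.1 ∧ 0 < y.2 ∧ y.1 + y.2 < k ∧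
      u₁ x < u₁ y ∧ u₂ x < u₂ y := by
  have hr : k - x.1 - x.2 ≠ 0 := by linarith
  obtain ⟨c, hc⟩ : ∃ c, c * (k - x.1 - x.2 - β₁ * x.1 - β₂ * x.2) = x.1 + x.2 :=
    ⟨_, div_mul_cancel₀ _ fun h ↦ hoff (by linarith)⟩
  -- Along `d` the common factor `k - x₁ - x₂` decreases at rate `c (k - x₁ - x₂)`, which exactly
  -- cancels the excess `β_i c` of each party's own logarithmic gain.
  set d : ℝ × ℝ := (x.1 * (1 + β₁ * c), x.2 * (1 + β₂ * c))
  have hline : ∀ t : ℝ, k - (x.1 + t * d.1) - (x.2 + t * d.2) =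
      (k - x.1 - x.2) + t * -(c * (k - x.1 - x.2)) := fun t ↦ by
    linear_combination t * hc
  have h₁ : HasDerivAt (u₁ ∘ fun t : ℝ ↦ x + t • d) 1 0 := by
    convert hasDerivAt_log_add_mul_log β₁ hx₁.ne' hr (da := d.1) (dr := -(c * (k - x.1 - x.2)))
      using 1
    · funext t
      simp only [Function.comp_apply, hu₁, Prod.fst_add, Prod.snd_add, Prod.smul_fst,
        Prod.smul_snd, smul_eq_mul, hline]
    · field_simp; ring
  have h₂ : HasDerivAt (u₂ ∘ fun t : ℝ ↦ x + t • d) 1 0 := by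
    convert hasDerivAt_log_add_mul_log β₂ hx₂.ne' hr (da := d.2) (dr := -(c * (k - x.1 - x.2)))
      using 1
    · funext t
      simp only [Function.comp_apply, hu₂, Prod.fst_add, Prod.snd_add, Prod.smul_fst,
        Prod.smul_snd, smul_eq_mul, hline]
    · field_simp; ring
  have hΩ : IsOpen {p : ℝ × ℝ | 0 < p.1 ∧ 0 < p.2 ∧ p.1 + p.2 < k} :=
    (isOpen_lt continuous_const continuous_fst).inter ((isOpen_lt continuous_const
      continuous_snd).inter (isOpen_lt (continuous_fst.add continuous_snd) continuous_const))
  obtain ⟨t, hyΩ, hy₁, hy₂⟩ := exists_lt_lt_of_hasDerivAt_comp (γ := fun t : ℝ ↦ x + t • d)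
    (by fun_prop) (hΩ.mem_nhds (by simpa using ⟨hx₁, hx₂, hxsum⟩)) h₁ h₂ one_pos one_pos
  simp only [zero_smul, add_zero] at hy₁ hy₂
  exact ⟨x + t • d, hyΩ.1, hyΩ.2.1, hyΩ.2.2, hy₁, hy₂⟩

/-- Fix `k > 0`, `β₁ > 0`, `β₂ > 0` and the utilities
`u₁ (x₁,x₂) = log x₁ + β₁ log (k-x₁-x₂)`, `u₂ (x₁,x₂) = log x₂ + β₂ log (k-x₁-x₂)`.
If `x = (x₁,x₂)` lies in the open region but off the line
`(1+β₁)x₁+(1+β₂)x₂ = k`, then some point `y` of the open region strictly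
improves both utilities: `x` is not Pareto efficient. -/
theorem stmt_6 (k β₁ β₂ : ℝ) (hk : 0 < k) (hβ₁ : 0 < β₁) (hβ₂ : 0 < β₂)
    (u₁ u₂ : ℝ × ℝ → ℝ)
    (hu₁ : ∀ p : ℝ × ℝ, u₁ p = Real.log p.1 + β₁ * Real.log (k - p.1 - p.2))
    (hu₂ : ∀ p : ℝ × ℝ, u₂ p = Real.log p.2 + β₂ * Real.log (k - p.1 - p.2))
    (x : ℝ × ℝ) (hx₁ : 0 < x.1) (hx₂ : 0 < x.2) (hxsum : x.1 + x.2 < k)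
    (hoff : (1 + β₁) * x.1 + (1 + β₂) * x.2 ≠ k) :
    ∃ y : ℝ × ℝ, 0 < y.1 ∧ 0 < y.2 ∧ y.1 + y.2 < k ∧
      u₁ x < u₁ y ∧ u₂ x < u₂ y :=
  stmt_6_general k β₁ β₂ u₁ u₂ hu₁ hu₂ x hx₁ hx₂ hxsum hoff
end

section
/- Fix k > 0, β₁ > 0, β₂ > 0 and let u₁(x₁,x₂) = log x₁ + β₁ log(k − x₁ − x₂), u₂(x₁,x₂) = log x₂ + β₂ log(k − x₁ − x₂). Let x = (x₁,x₂) satisfy x₁ > 0, x₂ > 0, x₁ + x₂ < k and (1+β₁)x₁ + (1+β₂)x₂ ≠ k, and set G = ∇u₁(x)/(2‖∇u₁(x)‖) + ∇u₂(x)/(2‖∇u₂(x)‖). Then ⟨G, ∇u₁(x)⟩ > 0 and ⟨G, ∇u₂(x)⟩ > 0; that is, at every interior point off the Pareto frontier line, the IDM bisector direction strictly improves both parties' utilities to first order. -/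
/-!
The bisector `G = u/(2‖u‖) + v/(2‖v‖)` satisfies `2‖v‖ ⟪G, u⟫ = ‖u‖‖v‖ + ⟪u, v⟫`, and symmetrically
for `v`, so it improves both utilities exactly when the two gradients are not antiparallel. In the
plane this is strict Cauchy–Schwarz, which holds as soon as the determinant of the gradients is
nonzero (Lagrange's identity). For these utilities that determinant equals
`(k - (1+β₁)x₁ - (1+β₂)x₂) / (x₁ x₂ (k - x₁ - x₂))`, nonzero off the frontier line.
-/

open scoped RealInnerProductSpace

section Bisector

variable {E : Type*} [NormedAddCommGroup E] [InnerProductSpace ℝ E] {u v : E}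

theorem inner_bisector_left_pos (h : -(‖u‖ * ‖v‖) < ⟪u, v⟫) :
    0 < ⟪(2 * ‖u‖)⁻¹ • u + (2 * ‖v‖)⁻¹ • v, u⟫ := by
  have hsum : 0 < ‖u‖ * ‖v‖ + ⟪u, v⟫ := by linarith
  have huv : 0 < ‖u‖ * ‖v‖ := by linarith [real_inner_le_norm u v]
  have hu : 0 < ‖u‖ := pos_of_mul_pos_left huv (norm_nonneg v)
  have hv : 0 < ‖v‖ := pos_of_mul_pos_right huv (norm_nonneg u)
  have inner_eq : ⟪(2 * ‖u‖)⁻¹ • u + (2 * ‖v‖)⁻¹ • v, u⟫ = (‖u‖ * ‖v‖ + ⟪u, v⟫) / (2 * ‖v‖) := by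
    rw [inner_add_left, real_inner_smul_left, real_inner_smul_left, real_inner_self_eq_norm_sq,
      real_inner_comm]
    field_simp
  rw [inner_eq]
  positivity

theorem inner_bisector_right_pos (h : -(‖u‖ * ‖v‖) < ⟪u, v⟫) :
    0 < ⟪(2 * ‖u‖)⁻¹ • u + (2 * ‖v‖)⁻¹ • v, v⟫ := by
  rw [add_comm]
  rw [mul_comm, real_inner_comm] at h
  exact inner_bisector_left_pos h

end Bisector

theorem EuclideanSpace.norm_sq_mul_norm_sq_eq_inner_sq_add_det_sq (u v : EuclideanSpace ℝ (Fin 2)) :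
    ‖u‖ ^ 2 * ‖v‖ ^ 2 = ⟪u, v⟫ ^ 2 + (u 0 * v 1 - u 1 * v 0) ^ 2 := by
  simp only [EuclideanSpace.norm_sq_eq, PiLp.inner_apply, Fin.sum_univ_two, Real.norm_eq_abs,
    sq_abs, RCLike.inner_apply, conj_trivial]
  ring

theorem EuclideanSpace.abs_inner_lt_norm_mul_norm_of_det_ne_zero {u v : EuclideanSpace ℝ (Fin 2)}
    (h : u 0 * v 1 - u 1 * v 0 ≠ 0) : |⟪u, v⟫| < ‖u‖ * ‖v‖ := by
  refine abs_lt_of_sq_lt_sq ?_ (by positivity)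
  rw [mul_pow, norm_sq_mul_norm_sq_eq_inner_sq_add_det_sq]
  have := pow_pos (abs_pos.mpr h) 2
  rw [sq_abs] at this
  linarith

theorem utility_gradients_det {k β₁ β₂ x₁ x₂ : ℝ} (hx₁ : x₁ ≠ 0) (hx₂ : x₂ ≠ 0)
    (hs : k - x₁ - x₂ ≠ 0) :
    (1 / x₁ - β₁ / (k - x₁ - x₂)) * (1 / x₂ - β₂ / (k - x₁ - x₂))
        - (-β₁ / (k - x₁ - x₂)) * (-β₂ / (k - x₁ - x₂))
      = (k - ((1 + β₁) * x₁ + (1 + β₂) * x₂)) / (x₁ * x₂ * (k - x₁ - x₂)) := by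
  field_simp
  ring

theorem stmt_10_general (k β₁ β₂ x₁ x₂ : ℝ)
    (hx₁ : 0 < x₁) (hx₂ : 0 < x₂) (hsum : x₁ + x₂ < k)
    (hoff : (1 + β₁) * x₁ + (1 + β₂) * x₂ ≠ k)
    (g₁ g₂ G : EuclideanSpace ℝ (Fin 2))
    (hg₁ : g₁ = ![1 / x₁ - β₁ / (k - x₁ - x₂), -β₁ / (k - x₁ - x₂)])
    (hg₂ : g₂ = ![-β₂ / (k - x₁ - x₂), 1 / x₂ - β₂ / (k - x₁ - x₂)])
    (hG : G = (2 * ‖g₁‖)⁻¹ • g₁ + (2 * ‖g₂‖)⁻¹ • g₂) :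
    0 < ⟪G, g₁⟫ ∧ 0 < ⟪G, g₂⟫ := by
  have hs : 0 < k - x₁ - x₂ := by linarith
  have hdet : g₁ 0 * g₂ 1 - g₁ 1 * g₂ 0 ≠ 0 := by
    rw [hg₁, hg₂]
    simp only [Matrix.cons_val_zero, Matrix.cons_val_one]
    rw [utility_gradients_det hx₁.ne' hx₂.ne' hs.ne']
    exact div_ne_zero (sub_ne_zero.mpr hoff.symm) (by positivity)
  have hnot_antiparallel : -(‖g₁‖ * ‖g₂‖) < ⟪g₁, g₂⟫ :=
    neg_lt_of_abs_lt (EuclideanSpace.abs_inner_lt_norm_mul_norm_of_det_ne_zero hdet)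
  subst hG
  exact ⟨inner_bisector_left_pos hnot_antiparallel, inner_bisector_right_pos hnot_antiparallel⟩

/-- At an interior point `x = (x₁,x₂)` (with `x₁,x₂ > 0`, `x₁+x₂ < k`) off the
Pareto frontier line `(1+β₁)x₁ + (1+β₂)x₂ = k`, the IDM bisector
`G = ∇u₁/(2‖∇u₁‖) + ∇u₂/(2‖∇u₂‖)` of the two utility gradients
`∇u₁ = (1/x₁ - β₁/(k-x₁-x₂), -β₁/(k-x₁-x₂))` and
`∇u₂ = (-β₂/(k-x₁-x₂), 1/x₂ - β₂/(k-x₁-x₂))` satisfies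
`⟪G, ∇u₁⟫ > 0` and `⟪G, ∇u₂⟫ > 0`. -/
theorem stmt_10 (k β₁ β₂ x₁ x₂ : ℝ) (hk : 0 < k) (hβ₁ : 0 < β₁) (hβ₂ : 0 < β₂)
    (hx₁ : 0 < x₁) (hx₂ : 0 < x₂) (hsum : x₁ + x₂ < k)
    (hoff : (1 + β₁) * x₁ + (1 + β₂) * x₂ ≠ k)
    (g₁ g₂ G : EuclideanSpace ℝ (Fin 2))
    (hg₁ : g₁ = ![1 / x₁ - β₁ / (k - x₁ - x₂), -β₁ / (k - x₁ - x₂)])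
    (hg₂ : g₂ = ![-β₂ / (k - x₁ - x₂), 1 / x₂ - β₂ / (k - x₁ - x₂)])
    (hG : G = (2 * ‖g₁‖)⁻¹ • g₁ + (2 * ‖g₂‖)⁻¹ • g₂) :
    0 < ⟪G, g₁⟫ ∧ 0 < ⟪G, g₂⟫ :=
  stmt_10_general k β₁ β₂ x₁ x₂ hx₁ hx₂ hsum hoff g₁ g₂ G hg₁ hg₂ hG
end

section
/- Fix k > 0, β₁ > 0 and an interior point x₀ = (x₁,x₂) with x₁ > 0, x₂ > 0, x₁ + x₂ < k. Let u₁(x) = log x₁ + β₁ log(k − x₁ − x₂), and for each β > 0 let u₂^β(x) = log x₂ + β log(k − x₁ − x₂), so ∇u₂^β(x₀) = (−β/(k−x₁−x₂), 1/x₂ − β/(k−x₁−x₂)). Let G(β) = ∇u₁(x₀)/(2‖∇u₁(x₀)‖) + ∇u₂^β(x₀)/(2‖∇u₂^β(x₀)‖) be the mediator's announced IDM bisector direction. Then the map β ↦ G(β) is injective on (0,∞): if G(β) = G(β') for β, β' > 0, then β = β'. Consequently, party 1 can uniquely recover party 2's utility parameter β₂ from its own gradient and a single announced bisector direction. -/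
/-!
As `β` varies, party 2's gradient moves along the affine line `β ↦ p - β • q` with
`p = (0, 1/x₂)` and `q = (1, 1)/(k - x₁ - x₂)`. Since `p` and `q` are linearly independent,
this line misses the origin and meets every ray from the origin at most once. Party 1 cancels
its own half-unit vector from the bisector, which leaves a positive multiple of `p - β • q`,
hence the ray through it, hence `β`.
-/

section

variable {K V : Type*} [Field K] [AddCommGroup V] [Module K V] {p q : V}

theorem LinearIndependent.sub_smul_ne_zero (hpq : LinearIndependent K ![p, q]) (β : K) :
    p - β • q ≠ 0 := by
  intro h
  have := LinearIndependent.pair_iff.mp hpq 1 (-β) (by rw [← h, neg_smul, one_smul, sub_eq_add_neg])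
  exact one_ne_zero this.1

theorem LinearIndependent.eq_of_smul_sub_smul_eq (hpq : LinearIndependent K ![p, q])
    {a a' β β' : K} (ha : a ≠ 0) (h : a • (p - β • q) = a' • (p - β' • q)) : β = β' := by
  obtain ⟨hp, hq⟩ := LinearIndependent.pair_iff.mp hpq (a - a') (a' * β' - a * β) (by
    rw [sub_smul, sub_smul, mul_smul, mul_smul, ← sub_eq_zero.mpr h]
    simp only [smul_sub]
    abel)
  obtain rfl : a = a' := sub_eq_zero.mp hp
  exact mul_left_cancel₀ ha (sub_eq_zero.mp hq).symm

end

theorem linearIndependent_pair_zero_cons {K : Type*} [Field K] {s t u : K} (hs : s ≠ 0)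
    (ht : t ≠ 0) : LinearIndependent K ![![0, s], ![t, u]] := by
  refine LinearIndependent.pair_iff.mpr fun σ τ h => ?_
  have h₀ := congrFun h 0
  have h₁ := congrFun h 1
  simp only [Pi.add_apply, Pi.smul_apply, Matrix.cons_val_zero, Matrix.cons_val_one, smul_eq_mul,
    mul_zero, zero_add, Pi.zero_apply] at h₀ h₁
  obtain rfl : τ = 0 := by simpa [ht] using h₀
  simpa [hs] using h₁

theorem stmt_11_general (k x₁ x₂ : ℝ)
    (hx₂ : 0 < x₂) (hsum : x₁ + x₂ < k)
    (g₁ : EuclideanSpace ℝ (Fin 2))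
    (g₂ : ℝ → EuclideanSpace ℝ (Fin 2))
    (hg₂ : ∀ β : ℝ, g₂ β = ![-β / (k - x₁ - x₂), 1 / x₂ - β / (k - x₁ - x₂)])
    (G : ℝ → EuclideanSpace ℝ (Fin 2))
    (hG : ∀ β : ℝ, G β = (2 * ‖g₁‖)⁻¹ • g₁ + (2 * ‖g₂ β‖)⁻¹ • g₂ β) :
    ∀ β β' : ℝ, 0 < β → 0 < β' → G β = G β' → β = β' := by
  intro β β' _ _ hGβ
  have hc : k - x₁ - x₂ ≠ 0 := by linarith
  set c := k - x₁ - x₂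
  have hpq := linearIndependent_pair_zero_cons (u := c⁻¹) (one_div_ne_zero hx₂.ne')
    (inv_ne_zero hc)
  have hline : ∀ b, WithLp.ofLp (g₂ b) = ![0, 1 / x₂] - b • ![c⁻¹, c⁻¹] := by
    intro b
    rw [hg₂]
    ext i
    fin_cases i <;> simp [div_eq_mul_inv, neg_mul]
  have hscaled : (2 * ‖g₂ β‖)⁻¹ • g₂ β = (2 * ‖g₂ β'‖)⁻¹ • g₂ β' :=
    add_left_cancel (by rwa [hG, hG] at hGβ)
  have hne : g₂ β ≠ 0 := fun h => hpq.sub_smul_ne_zero β (by rw [← hline, h]; rfl)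
  have hcoords := congrArg WithLp.ofLp hscaled
  rw [WithLp.ofLp_smul, WithLp.ofLp_smul, hline, hline] at hcoords
  exact hpq.eq_of_smul_sub_smul_eq (by positivity) hcoords

/-- IDM is not Information-Concealing: at a fixed interior point
`x₀ = (x₁,x₂)`, let `g₁ = ∇u₁(x₀)` be party 1's gradient and, for each `β > 0`,
let `g₂ β = (-β/(k-x₁-x₂), 1/x₂ - β/(k-x₁-x₂))` be the gradient of party 2's
utility `u₂^β`. The map sending `β` to the announced IDM bisector
`G β = g₁/(2‖g₁‖) + (g₂ β)/(2‖g₂ β‖)` is injective on `(0, ∞)`: party 1 can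
uniquely recover `β₂` from a single announcement. -/
theorem stmt_11 (k β₁ x₁ x₂ : ℝ) (hk : 0 < k) (hβ₁ : 0 < β₁)
    (hx₁ : 0 < x₁) (hx₂ : 0 < x₂) (hsum : x₁ + x₂ < k)
    (g₁ : EuclideanSpace ℝ (Fin 2))
    (hg₁ : g₁ = ![1 / x₁ - β₁ / (k - x₁ - x₂), -β₁ / (k - x₁ - x₂)])
    (g₂ : ℝ → EuclideanSpace ℝ (Fin 2))
    (hg₂ : ∀ β : ℝ, g₂ β = ![-β / (k - x₁ - x₂), 1 / x₂ - β / (k - x₁ - x₂)])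
    (G : ℝ → EuclideanSpace ℝ (Fin 2))
    (hG : ∀ β : ℝ, G β = (2 * ‖g₁‖)⁻¹ • g₁ + (2 * ‖g₂ β‖)⁻¹ • g₂ β) :
    ∀ β β' : ℝ, 0 < β → 0 < β' → G β = G β' → β = β' :=
  stmt_11_general k x₁ x₂ hx₂ hsum g₁ g₂ hg₂ G hG
end

section
/- Fix k > 0, β₁ > 0, β₂ > 0 and let u₁(x₁,x₂) = log x₁ + β₁ log(k − x₁ − x₂), u₂(x₁,x₂) = log x₂ + β₂ log(k − x₁ − x₂). Let x = (x₁,x₂) satisfy x₁ > 0, x₂ > 0, x₁ + x₂ < k and (1+β₁)x₁ + (1+β₂)x₂ = k, and let t > 0 be such that ∇u₁(x) = −t·∇u₂(x). Then x is the unique maximizer over Ω = {(y₁,y₂) : y₁ > 0, y₂ > 0, y₁ + y₂ < k} of the strictly concave function φ = u₁ + t·u₂; that is, for every y ∈ Ω with y ≠ x, u₁(y) + t·u₂(y) < u₁(x) + t·u₂(x). -/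
/-!
Write `s(y) = k - y₁ - y₂` and `c = β₁ + t β₂`, so that `u₁ + t u₂ = log y₁ + t log y₂ + c log s(y)`.
The gradient condition says exactly `s(x) = c x₁` and `t s(x) = c x₂`. Bounding each logarithm by
its tangent line at `x` (`log a - log b ≤ a / b - 1`) bounds `φ(y) - φ(x)` by a linear expression
in `y`, and the two stationarity equations make that expression vanish identically. The tangent
bound is strict as soon as `y₁ ≠ x₁` or `y₂ ≠ x₂`.
-/

open Real

lemma log_sub_log_le_div_sub_one {a b : ℝ} (ha : 0 < a) (hb : 0 < b) :
    log a - log b ≤ a / b - 1 := by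
  rw [← log_div ha.ne' hb.ne']
  exact log_le_sub_one_of_pos (div_pos ha hb)

lemma log_sub_log_lt_div_sub_one {a b : ℝ} (ha : 0 < a) (hb : 0 < b) (hab : a ≠ b) :
    log a - log b < a / b - 1 := by
  rw [← log_div ha.ne' hb.ne']
  exact log_lt_sub_one_of_pos (div_pos ha hb) (by rwa [Ne, div_eq_one_iff_eq hb.ne'])

lemma weighted_log_lt_of_stationary {k t c : ℝ} {x y : ℝ × ℝ}
    (hx₁ : 0 < x.1) (hx₂ : 0 < x.2) (hxs : 0 < k - x.1 - x.2)
    (hy₁ : 0 < y.1) (hy₂ : 0 < y.2) (hys : 0 < k - y.1 - y.2)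
    (ht : 0 < t) (hc : 0 ≤ c)
    (h₁ : k - x.1 - x.2 = c * x.1) (h₂ : t * (k - x.1 - x.2) = c * x.2) (hne : y ≠ x) :
    log y.1 + t * log y.2 + c * log (k - y.1 - y.2) <
      log x.1 + t * log x.2 + c * log (k - x.1 - x.2) := by
  have tangent_sum_eq_zero : (y.1 / x.1 - 1) + t * (y.2 / x.2 - 1)
      + c * ((k - y.1 - y.2) / (k - x.1 - x.2) - 1) = 0 := by
    field_simp
    linear_combination ((y.1 - x.1) * x.2) * h₁ + ((y.2 - x.2) * x.1) * h₂
  have bound₁ := log_sub_log_le_div_sub_one hy₁ hx₁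
  have bound₂ := mul_le_mul_of_nonneg_left (log_sub_log_le_div_sub_one hy₂ hx₂) ht.le
  have bound₃ := mul_le_mul_of_nonneg_left (log_sub_log_le_div_sub_one hys hxs) hc
  rcases eq_or_ne y.1 x.1 with h | h
  · have strict₂ := mul_lt_mul_of_pos_left
      (log_sub_log_lt_div_sub_one hy₂ hx₂ fun h' ↦ hne (Prod.ext h h')) ht
    linarith
  · have strict₁ := log_sub_log_lt_div_sub_one hy₁ hx₁ h
    linarith

theorem stmt_15_general (k β₁ β₂ : ℝ) (hβ₁ : 0 < β₁) (hβ₂ : 0 < β₂)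
    (u₁ u₂ : ℝ × ℝ → ℝ)
    (hu₁ : ∀ p : ℝ × ℝ, u₁ p = Real.log p.1 + β₁ * Real.log (k - p.1 - p.2))
    (hu₂ : ∀ p : ℝ × ℝ, u₂ p = Real.log p.2 + β₂ * Real.log (k - p.1 - p.2))
    (x : ℝ × ℝ) (hx₁ : 0 < x.1) (hx₂ : 0 < x.2) (hxsum : x.1 + x.2 < k)
    (t : ℝ) (ht : 0 < t)
    (hgrad : ((1 / x.1 - β₁ / (k - x.1 - x.2), -β₁ / (k - x.1 - x.2)) : ℝ × ℝ) =
      -t • ((-β₂ / (k - x.1 - x.2), 1 / x.2 - β₂ / (k - x.1 - x.2)) : ℝ × ℝ)) :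
    ∀ y : ℝ × ℝ, 0 < y.1 → 0 < y.2 → y.1 + y.2 < k → y ≠ x →
      u₁ y + t * u₂ y < u₁ x + t * u₂ x := by
  intro y hy₁ hy₂ hysum hne
  have hxs : 0 < k - x.1 - x.2 := by linarith
  obtain ⟨hgrad₁, hgrad₂⟩ := Prod.ext_iff.mp hgrad
  simp only [Prod.smul_fst, Prod.smul_snd, smul_eq_mul] at hgrad₁ hgrad₂
  have h₁ : k - x.1 - x.2 = (β₁ + t * β₂) * x.1 := by
    field_simp at hgrad₁
    linarith
  have h₂ : t * (k - x.1 - x.2) = (β₁ + t * β₂) * x.2 := by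
    field_simp at hgrad₂
    linarith
  have key := weighted_log_lt_of_stationary hx₁ hx₂ hxs hy₁ hy₂ (by linarith) ht
    (by positivity) h₁ h₂ hne
  rw [hu₁, hu₂, hu₁, hu₂]
  linarith

/-- Scalarization: let `x = (x₁,x₂)` lie in the open region and on the frontier
line `(1+β₁)x₁ + (1+β₂)x₂ = k`, and let `t > 0` satisfy
`∇u₁(x) = -t • ∇u₂(x)`. Then `x` is the unique maximizer over
`Ω = {y : 0 < y₁, 0 < y₂, y₁ + y₂ < k}` of `φ = u₁ + t • u₂`. -/
theorem stmt_15 (k β₁ β₂ : ℝ) (hk : 0 < k) (hβ₁ : 0 < β₁) (hβ₂ : 0 < β₂)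
    (u₁ u₂ : ℝ × ℝ → ℝ)
    (hu₁ : ∀ p : ℝ × ℝ, u₁ p = Real.log p.1 + β₁ * Real.log (k - p.1 - p.2))
    (hu₂ : ∀ p : ℝ × ℝ, u₂ p = Real.log p.2 + β₂ * Real.log (k - p.1 - p.2))
    (x : ℝ × ℝ) (hx₁ : 0 < x.1) (hx₂ : 0 < x.2) (hxsum : x.1 + x.2 < k)
    (hfront : (1 + β₁) * x.1 + (1 + β₂) * x.2 = k)
    (t : ℝ) (ht : 0 < t)
    (hgrad : ((1 / x.1 - β₁ / (k - x.1 - x.2), -β₁ / (k - x.1 - x.2)) : ℝ × ℝ) =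
      -t • ((-β₂ / (k - x.1 - x.2), 1 / x.2 - β₂ / (k - x.1 - x.2)) : ℝ × ℝ)) :
    ∀ y : ℝ × ℝ, 0 < y.1 → 0 < y.2 → y.1 + y.2 < k → y ≠ x →
      u₁ y + t * u₂ y < u₁ x + t * u₂ x :=
  stmt_15_general k β₁ β₂ hβ₁ hβ₂ u₁ u₂ hu₁ hu₂ x hx₁ hx₂ hxsum t ht hgrad
end
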